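/- Under the same hypotheses, if additionally τ is G-equivariant (τ∘σ = σ∘τ for all σ ∈ G), then for all probability measures α, β supported on Ω: W̄₁(ξ♯ f_φ(τ♯α), ξ♯ f_φ(τ♯β)) ≤ 2r · C_φ · C_τ · C_ξ · W̄₁(α, β), where C_τ, C_ξ are the Lipschitz constants of τ, ξ. -/

import Mathlib

open MeasureTheory NNReal ENNReal

noncomputable def W1 {E : Type*} [MeasurableSpace E] [PseudoMetricSpace E]
    (α β : Measure E) : ℝ :=
  ⨅ π : {π : Measure (E × E) // π.map Prod.fst = α ∧ π.map Prod.snd = β},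
    ∫ p, dist p.1 p.2 ∂(π : Measure (E × E))

noncomputable def permMap {d : ℕ} (σ : Equiv.Perm (Fin d)) :
    EuclideanSpace ℝ (Fin d) → EuclideanSpace ℝ (Fin d) :=
  fun x => WithLp.toLp 2 (fun i => x (σ i))

noncomputable def W1bar {d : ℕ} (G : Subgroup (Equiv.Perm (Fin d)))
    (α β : Measure (EuclideanSpace ℝ (Fin d))) : ℝ :=
  ⨅ σ : G, W1 (α.map (permMap (σ : Equiv.Perm (Fin d)))) β

/-- The invariant layer: pushforward of α by x ↦ ∫ φ(x,x') dα(x'). -/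
noncomputable def invLayer {d r : ℕ}
    (φ : EuclideanSpace ℝ (Fin d) → EuclideanSpace ℝ (Fin d) → EuclideanSpace ℝ (Fin r))
    (α : Measure (EuclideanSpace ℝ (Fin d))) : Measure (EuclideanSpace ℝ (Fin r)) :=
  α.map (fun x => ∫ x', φ x x' ∂α)

/-! Along a coupling `π` of `μ` and `ν`, the fields `x ↦ ∫ φ x w ∂μ` and `x ↦ ∫ φ x w ∂ν` are
both `Cφ`-Lipschitz and differ uniformly by at most `Cφ ∫ dist ∂π`, so `f_φ` is `2 Cφ`-Lipschitz
for `W₁`; pushing forward by `τ` and `ξ` costs the factors `Cτ` and `Cξ`. For `σ ∈ G`,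
equivariance of `τ` and invariance of `φ` give `f_φ(τ♯(σ♯α)) = f_φ(τ♯α)`, so `α` may be replaced
by `σ♯α` before taking the infimum over `σ`. The constant `2` is at most `2r` unless `r = 0`,
when the target space is a point. -/

namespace MeasureTheory.Measure

/-- Compact support keeps every continuous integrand below integrable, so that no Bochner
integral in a transport cost takes its junk value `0`. -/
def IsCompactlySupported {X : Type*} [TopologicalSpace X] [MeasurableSpace X]
    (μ : Measure X) : Prop :=
  ∃ K, IsCompact K ∧ μ Kᶜ = 0

namespace IsCompactlySupported

variable {X Y E : Type*} [TopologicalSpace X] [MeasurableSpace X] [OpensMeasurableSpace X]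
  {μ : Measure X}

theorem integrable [T2Space X] [NormedAddCommGroup E] [IsFiniteMeasure μ]
    (hμ : μ.IsCompactlySupported) {f : X → E} (hf : Continuous f) : Integrable f μ := by
  obtain ⟨K, hK, hμK⟩ := hμ
  rw [← restrict_eq_self_of_ae_mem (mem_ae_iff.mpr hμK)]
  exact hf.continuousOn.integrableOn_compact hK

theorem map [TopologicalSpace Y] [MeasurableSpace Y] [BorelSpace Y] [T2Space Y]
    (hμ : μ.IsCompactlySupported) {f : X → Y} (hf : Continuous f) :
    (μ.map f).IsCompactlySupported := by
  obtain ⟨K, hK, hμK⟩ := hμ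
  refine ⟨f '' K, hK.image hf, ?_⟩
  rw [map_apply hf.measurable (hK.image hf).isClosed.measurableSet.compl]
  exact measure_mono_null (fun x hx hxK => hx ⟨x, hxK, rfl⟩) hμK

theorem of_map_fst_of_map_snd [T2Space X] {π : Measure (X × X)}
    (h₁ : (π.map Prod.fst).IsCompactlySupported)
    (h₂ : (π.map Prod.snd).IsCompactlySupported) : π.IsCompactlySupported := by
  obtain ⟨K₁, hK₁, hπK₁⟩ := h₁
  obtain ⟨K₂, hK₂, hπK₂⟩ := h₂
  rw [map_apply measurable_fst hK₁.isClosed.measurableSet.compl] at hπK₁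
  rw [map_apply measurable_snd hK₂.isClosed.measurableSet.compl] at hπK₂
  refine ⟨K₁ ×ˢ K₂, hK₁.prod hK₂, ?_⟩
  rw [Set.compl_prod_eq_union, Set.prod_univ, Set.univ_prod]
  exact measure_union_null hπK₁ hπK₂

end IsCompactlySupported

end MeasureTheory.Measure

open Measure

section Wasserstein

variable {X Y : Type*} [MeasurableSpace X] [MeasurableSpace Y]

theorem W1_nonneg [PseudoMetricSpace X] (μ ν : Measure X) : 0 ≤ W1 μ ν :=
  Real.iInf_nonneg fun _ => integral_nonneg fun _ => dist_nonneg

theorem W1_eq_zero_of_subsingleton [PseudoMetricSpace X] [Subsingleton X] (μ ν : Measure X) :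
    W1 μ ν = 0 :=
  have hdist : ∀ p : X × X, dist p.1 p.2 = 0 := fun p => by
    rw [Subsingleton.elim p.1 p.2, dist_self]
  le_antisymm (Real.iInf_nonpos fun _ => by simp [hdist]) (W1_nonneg μ ν)

theorem W1_le_integral_dist [PseudoMetricSpace X] {μ ν : Measure X} {π : Measure (X × X)}
    (hπ₁ : π.map Prod.fst = μ) (hπ₂ : π.map Prod.snd = ν) :
    W1 μ ν ≤ ∫ p, dist p.1 p.2 ∂π := by
  refine ciInf_le ?_ (⟨π, hπ₁, hπ₂⟩ : {π : Measure (X × X) // _})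
  exact ⟨0, Set.forall_mem_range.2 fun π => integral_nonneg fun _ => dist_nonneg⟩

theorem le_mul_W1 [PseudoMetricSpace X] {μ ν : Measure X} [IsProbabilityMeasure μ]
    [IsProbabilityMeasure ν] {a c : ℝ} (hc : 0 ≤ c)
    (h : ∀ π : Measure (X × X), π.map Prod.fst = μ → π.map Prod.snd = ν →
      a ≤ c * ∫ p, dist p.1 p.2 ∂π) :
    a ≤ c * W1 μ ν := by
  have : Nonempty {π : Measure (X × X) // π.map Prod.fst = μ ∧ π.map Prod.snd = ν} :=
    ⟨⟨μ.prod ν, by simp⟩⟩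
  rw [W1, Real.mul_iInf_of_nonneg hc]
  exact le_ciInf fun π => h π.1 π.2.1 π.2.2

theorem W1_map_le_integral [PseudoMetricSpace X] [PseudoMetricSpace Y] [BorelSpace Y]
    [SecondCountableTopology Y] {μ ν : Measure X} {π : Measure (X × X)}
    (hπ₁ : π.map Prod.fst = μ) (hπ₂ : π.map Prod.snd = ν) {f g : X → Y}
    (hf : Measurable f) (hg : Measurable g) :
    W1 (μ.map f) (ν.map g) ≤ ∫ p, dist (f p.1) (g p.2) ∂π := by
  have hfg : Measurable (Prod.map f g) := hf.prodMap hg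
  refine (W1_le_integral_dist (π := π.map (Prod.map f g)) ?_ ?_).trans_eq ?_
  · rw [map_map measurable_fst hfg, ← hπ₁, map_map hf measurable_fst]; rfl
  · rw [map_map measurable_snd hfg, ← hπ₂, map_map hg measurable_snd]; rfl
  · exact integral_map hfg.aemeasurable (continuous_fst.dist continuous_snd).aestronglyMeasurable

variable [MetricSpace X] [BorelSpace X] [SecondCountableTopology X]

theorem integrable_dist_of_map_fst_of_map_snd {μ ν : Measure X} [IsProbabilityMeasure μ]
    (hμ : μ.IsCompactlySupported) (hν : ν.IsCompactlySupported) {π : Measure (X × X)}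
    (hπ₁ : π.map Prod.fst = μ) (hπ₂ : π.map Prod.snd = ν) :
    Integrable (fun p => dist p.1 p.2) π := by
  have : IsProbabilityMeasure (π.map Prod.fst) := hπ₁ ▸ inferInstance
  have : IsProbabilityMeasure π := isProbabilityMeasure_of_map Prod.fst
  exact (IsCompactlySupported.of_map_fst_of_map_snd (hπ₁ ▸ hμ) (hπ₂ ▸ hν)).integrable
    (continuous_fst.dist continuous_snd)

theorem W1_map_le [MetricSpace Y] [BorelSpace Y] [SecondCountableTopology Y]
    {μ ν : Measure X} [IsProbabilityMeasure μ] [IsProbabilityMeasure ν]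
    (hμ : μ.IsCompactlySupported) (hν : ν.IsCompactlySupported) {C : ℝ≥0} {f : X → Y}
    (hf : LipschitzWith C f) :
    W1 (μ.map f) (ν.map f) ≤ C * W1 μ ν := by
  refine le_mul_W1 C.coe_nonneg fun π hπ₁ hπ₂ => ?_
  have hcost := integrable_dist_of_map_fst_of_map_snd hμ hν hπ₁ hπ₂
  calc W1 (μ.map f) (ν.map f) ≤ ∫ p, dist (f p.1) (f p.2) ∂π :=
        W1_map_le_integral hπ₁ hπ₂ hf.continuous.measurable hf.continuous.measurable
    _ ≤ ∫ p, C * dist p.1 p.2 ∂π :=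
        integral_mono_of_nonneg (ae_of_all _ fun _ => dist_nonneg) (hcost.const_mul _)
          (ae_of_all _ fun _ => hf.dist_le_mul _ _)
    _ = C * ∫ p, dist p.1 p.2 ∂π := integral_const_mul _ _

end Wasserstein

section Integral

variable {X Z E : Type*} [MeasurableSpace X] [NormedAddCommGroup E] [NormedSpace ℝ E]

theorem lipschitzWith_integral [PseudoMetricSpace Z] {μ : Measure X} [IsProbabilityMeasure μ]
    {L : ℝ≥0} {f : Z → X → E} (hf : ∀ x, LipschitzWith L fun z => f z x)
    (hint : ∀ z, Integrable (f z) μ) :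
    LipschitzWith L fun z => ∫ x, f z x ∂μ := by
  refine LipschitzWith.of_dist_le_mul fun a b => ?_
  rw [dist_eq_norm, ← integral_sub (hint a) (hint b)]
  calc ‖∫ x, f a x - f b x ∂μ‖ ≤ ∫ _, L * dist a b ∂μ :=
        norm_integral_le_of_norm_le (integrable_const _) (ae_of_all _ fun x => by
          rw [← dist_eq_norm]; exact (hf x).dist_le_mul a b)
    _ = L * dist a b := by simp

/-- The easy half of Kantorovich–Rubinstein duality. -/
theorem dist_integral_le_mul_integral_dist [MetricSpace X] [BorelSpace X]
    [SecondCountableTopology X] {μ ν : Measure X} {π : Measure (X × X)}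
    (hπ₁ : π.map Prod.fst = μ) (hπ₂ : π.map Prod.snd = ν)
    (hcost : Integrable (fun p => dist p.1 p.2) π) {L : ℝ≥0} {g : X → E}
    (hg : LipschitzWith L g) (hgμ : Integrable g μ) (hgν : Integrable g ν) :
    dist (∫ x, g x ∂μ) (∫ x, g x ∂ν) ≤ L * ∫ p, dist p.1 p.2 ∂π := by
  subst hπ₁ hπ₂
  have hg₁ : Integrable (fun p : X × X => g p.1) π := hgμ.comp_measurable measurable_fst
  have hg₂ : Integrable (fun p : X × X => g p.2) π := hgν.comp_measurable measurable_snd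
  rw [integral_map measurable_fst.aemeasurable hg.continuous.aestronglyMeasurable,
    integral_map measurable_snd.aemeasurable hg.continuous.aestronglyMeasurable,
    dist_eq_norm, ← integral_sub hg₁ hg₂, ← integral_const_mul]
  refine norm_integral_le_of_norm_le (hcost.const_mul _) (ae_of_all _ fun p => ?_)
  rw [← dist_eq_norm]
  exact hg.dist_le_mul _ _

end Integral

theorem continuous_permMap {d : ℕ} (σ : Equiv.Perm (Fin d)) : Continuous (permMap σ) := by
  unfold permMap
  fun_prop

section InvariantLayer

variable {d r : ℕ} {Cφ : ℝ≥0}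
  {φ : EuclideanSpace ℝ (Fin d) → EuclideanSpace ℝ (Fin d) → EuclideanSpace ℝ (Fin r)}
  {γ : Measure (EuclideanSpace ℝ (Fin d))} [IsProbabilityMeasure γ]

theorem isProbabilityMeasure_invLayer (hφ₁ : ∀ z, Continuous (φ z))
    (hφ₂ : ∀ z, LipschitzWith Cφ fun w => φ w z) (hγ : γ.IsCompactlySupported) :
    IsProbabilityMeasure (invLayer φ γ) :=
  isProbabilityMeasure_map
    (lipschitzWith_integral hφ₂ fun z => hγ.integrable (hφ₁ z)).continuous.aemeasurable

theorem isCompactlySupported_invLayer (hφ₁ : ∀ z, Continuous (φ z))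
    (hφ₂ : ∀ z, LipschitzWith Cφ fun w => φ w z) (hγ : γ.IsCompactlySupported) :
    (invLayer φ γ).IsCompactlySupported :=
  hγ.map (lipschitzWith_integral hφ₂ fun z => hγ.integrable (hφ₁ z)).continuous

theorem invLayer_map_of_invariant (hφ₁ : ∀ z, Continuous (φ z))
    (hφ₂ : ∀ z, LipschitzWith Cφ fun w => φ w z)
    {e : EuclideanSpace ℝ (Fin d) → EuclideanSpace ℝ (Fin d)} (he : Continuous e)
    (hφe : ∀ z₁ z₂, φ (e z₁) (e z₂) = φ z₁ z₂)
    (hγ : γ.IsCompactlySupported) :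
    invLayer φ (γ.map e) = invLayer φ γ := by
  have : IsProbabilityMeasure (γ.map e) := isProbabilityMeasure_map he.aemeasurable
  have hF := lipschitzWith_integral hφ₂ fun z => (hγ.map he).integrable (hφ₁ z)
  rw [invLayer, invLayer, map_map hF.continuous.measurable he.measurable]
  congr 1
  funext x
  simp only [Function.comp, integral_map he.aemeasurable (hφ₁ _).aestronglyMeasurable, hφe]

theorem invLayer_map_permMap_map (hφ₁ : ∀ z, Continuous (φ z))
    (hφ₂ : ∀ z, LipschitzWith Cφ fun w => φ w z) {σ : Equiv.Perm (Fin d)}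
    (hφσ : ∀ z₁ z₂, φ (permMap σ z₁) (permMap σ z₂) = φ z₁ z₂)
    {τ : EuclideanSpace ℝ (Fin d) → EuclideanSpace ℝ (Fin d)} (hτ : Continuous τ)
    (hτσ : ∀ x, τ (permMap σ x) = permMap σ (τ x)) (hγ : γ.IsCompactlySupported) :
    invLayer φ ((γ.map (permMap σ)).map τ) = invLayer φ (γ.map τ) := by
  have : IsProbabilityMeasure (γ.map τ) := isProbabilityMeasure_map hτ.aemeasurable
  have hcomm : (γ.map (permMap σ)).map τ = (γ.map τ).map (permMap σ) := by
    rw [map_map hτ.measurable (continuous_permMap σ).measurable,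
      map_map (continuous_permMap σ).measurable hτ.measurable]
    exact congrArg γ.map (funext hτσ)
  rw [hcomm, invLayer_map_of_invariant hφ₁ hφ₂ (continuous_permMap σ) hφσ (hγ.map hτ)]

theorem W1_invLayer_le (hφ₁ : ∀ z, LipschitzWith Cφ (φ z))
    (hφ₂ : ∀ z, LipschitzWith Cφ fun w => φ w z) {μ ν : Measure (EuclideanSpace ℝ (Fin d))}
    [IsProbabilityMeasure μ] [IsProbabilityMeasure ν]
    (hμ : μ.IsCompactlySupported) (hν : ν.IsCompactlySupported) :
    W1 (invLayer φ μ) (invLayer φ ν) ≤ 2 * Cφ * W1 μ ν := by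
  have hintμ z : Integrable (φ z) μ := hμ.integrable (hφ₁ z).continuous
  have hintν z : Integrable (φ z) ν := hν.integrable (hφ₁ z).continuous
  have hFμ := lipschitzWith_integral hφ₂ hintμ
  have hFν := lipschitzWith_integral hφ₂ hintν
  refine le_mul_W1 (by positivity) fun π hπ₁ hπ₂ => ?_
  have : IsProbabilityMeasure (π.map Prod.fst) := hπ₁ ▸ inferInstance
  have : IsProbabilityMeasure π := isProbabilityMeasure_of_map Prod.fst
  have hcost := integrable_dist_of_map_fst_of_map_snd hμ hν hπ₁ hπ₂
  set cost := ∫ p, dist p.1 p.2 ∂π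
  have hgap z : dist (∫ w, φ z w ∂μ) (∫ w, φ z w ∂ν) ≤ Cφ * cost :=
    dist_integral_le_mul_integral_dist hπ₁ hπ₂ hcost (hφ₁ z) (hintμ z) (hintν z)
  calc W1 (invLayer φ μ) (invLayer φ ν)
      ≤ ∫ p, dist (∫ w, φ p.1 w ∂μ) (∫ w, φ p.2 w ∂ν) ∂π :=
        W1_map_le_integral hπ₁ hπ₂ hFμ.continuous.measurable hFν.continuous.measurable
    _ ≤ ∫ p, (Cφ * dist p.1 p.2 + Cφ * cost) ∂π := by
        refine integral_mono_of_nonneg (ae_of_all _ fun _ => dist_nonneg)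
          ((hcost.const_mul _).add (integrable_const _)) (ae_of_all _ fun p => ?_)
        exact (dist_triangle _ (∫ w, φ p.2 w ∂μ) _).trans
          (add_le_add (hFμ.dist_le_mul p.1 p.2) (hgap p.2))
    _ = 2 * Cφ * cost := by
        rw [integral_add (hcost.const_mul _) (integrable_const _), integral_const_mul]
        simp only [integral_const, probReal_univ, one_smul]
        ring

theorem W1_map_invLayer_map_le (hφ₁ : ∀ z, LipschitzWith Cφ (φ z))
    (hφ₂ : ∀ z, LipschitzWith Cφ fun w => φ w z) {Cτ Cξ : ℝ≥0}
    {τ : EuclideanSpace ℝ (Fin d) → EuclideanSpace ℝ (Fin d)}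
    {ξ : EuclideanSpace ℝ (Fin r) → EuclideanSpace ℝ (Fin r)}
    (hτ : LipschitzWith Cτ τ) (hξ : LipschitzWith Cξ ξ)
    {μ ν : Measure (EuclideanSpace ℝ (Fin d))}
    [IsProbabilityMeasure μ] [IsProbabilityMeasure ν]
    (hμ : μ.IsCompactlySupported) (hν : ν.IsCompactlySupported) :
    W1 ((invLayer φ (μ.map τ)).map ξ) ((invLayer φ (ν.map τ)).map ξ)
      ≤ 2 * Cφ * Cτ * Cξ * W1 μ ν := by
  have hφ₁c z := (hφ₁ z).continuous
  have : IsProbabilityMeasure (μ.map τ) := isProbabilityMeasure_map hτ.continuous.aemeasurable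
  have : IsProbabilityMeasure (ν.map τ) := isProbabilityMeasure_map hτ.continuous.aemeasurable
  have hμτ := hμ.map hτ.continuous
  have hντ := hν.map hτ.continuous
  have := isProbabilityMeasure_invLayer hφ₁c hφ₂ hμτ
  have := isProbabilityMeasure_invLayer hφ₁c hφ₂ hντ
  calc W1 ((invLayer φ (μ.map τ)).map ξ) ((invLayer φ (ν.map τ)).map ξ)
      ≤ Cξ * W1 (invLayer φ (μ.map τ)) (invLayer φ (ν.map τ)) :=
        W1_map_le (isCompactlySupported_invLayer hφ₁c hφ₂ hμτ)
          (isCompactlySupported_invLayer hφ₁c hφ₂ hντ) hξ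
    _ ≤ Cξ * (2 * Cφ * (Cτ * W1 μ ν)) := by
        gcongr
        exact (W1_invLayer_le hφ₁ hφ₂ hμτ hντ).trans (by gcongr; exact W1_map_le hμ hν hτ)
    _ = 2 * Cφ * Cτ * Cξ * W1 μ ν := by ring

end InvariantLayer

theorem W1bar_nonneg {d : ℕ} (G : Subgroup (Equiv.Perm (Fin d)))
    (α β : Measure (EuclideanSpace ℝ (Fin d))) : 0 ≤ W1bar G α β :=
  Real.iInf_nonneg fun _ => W1_nonneg _ _

theorem le_mul_W1bar {d : ℕ} (G : Subgroup (Equiv.Perm (Fin d)))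
    {α β : Measure (EuclideanSpace ℝ (Fin d))} {a c : ℝ} (hc : 0 ≤ c)
    (h : ∀ σ ∈ G, a ≤ c * W1 (α.map (permMap σ)) β) : a ≤ c * W1bar G α β := by
  rw [W1bar, Real.mul_iInf_of_nonneg hc]
  exact le_ciInf fun σ => h σ σ.2

/-- if moreover τ is G-equivariant, then ξ♯ ∘ f_φ ∘ τ♯ is
(2r C_φ C_τ C_ξ)-Lipschitz for the G-invariant 1-Wasserstein distance. -/
theorem invariant_layer_equivariant_lipschitz {d r : ℕ} (G : Subgroup (Equiv.Perm (Fin d)))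
    (Cφ Cτ Cξ : ℝ≥0)
    (φ : EuclideanSpace ℝ (Fin d) → EuclideanSpace ℝ (Fin d) → EuclideanSpace ℝ (Fin r))
    (hLip1 : ∀ z, LipschitzWith Cφ (φ z))
    (hLip2 : ∀ z, LipschitzWith Cφ (fun w => φ w z))
    (hinv : ∀ σ ∈ G, ∀ z₁ z₂, φ (permMap σ z₁) (permMap σ z₂) = φ z₁ z₂)
    (τ : EuclideanSpace ℝ (Fin d) → EuclideanSpace ℝ (Fin d))
    (ξ : EuclideanSpace ℝ (Fin r) → EuclideanSpace ℝ (Fin r))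
    (hτ : LipschitzWith Cτ τ) (hξ : LipschitzWith Cξ ξ)
    (hequiv : ∀ σ ∈ G, ∀ x, τ (permMap σ x) = permMap σ (τ x))
    (Ω : Set (EuclideanSpace ℝ (Fin d))) (hΩ : IsCompact Ω)
    (α β : Measure (EuclideanSpace ℝ (Fin d)))
    [IsProbabilityMeasure α] [IsProbabilityMeasure β]
    (hαΩ : α Ωᶜ = 0) (hβΩ : β Ωᶜ = 0) :
    W1 ((invLayer φ (α.map τ)).map ξ) ((invLayer φ (β.map τ)).map ξ)
      ≤ 2 * r * Cφ * Cτ * Cξ * W1bar G α β := by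
  have hα : α.IsCompactlySupported := ⟨Ω, hΩ, hαΩ⟩
  have hβ : β.IsCompactlySupported := ⟨Ω, hΩ, hβΩ⟩
  have hbound : W1 ((invLayer φ (α.map τ)).map ξ) ((invLayer φ (β.map τ)).map ξ)
      ≤ 2 * Cφ * Cτ * Cξ * W1bar G α β := by
    refine le_mul_W1bar G (by positivity) fun σ hσ => ?_
    have : IsProbabilityMeasure (α.map (permMap σ)) :=
      isProbabilityMeasure_map (continuous_permMap σ).aemeasurable
    rw [← invLayer_map_permMap_map (fun z => (hLip1 z).continuous) hLip2 (hinv σ hσ)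
      hτ.continuous (hequiv σ hσ) hα]
    exact W1_map_invLayer_map_le hLip1 hLip2 hτ hξ (hα.map (continuous_permMap σ)) hβ
  rcases Nat.eq_zero_or_pos r with rfl | hr
  · simp [W1_eq_zero_of_subsingleton]
  · refine hbound.trans (mul_le_mul_of_nonneg_right ?_ (W1bar_nonneg G α β))
    have : (1 : ℝ) ≤ r := by exact_mod_cast hr
    gcongr
    linarith
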